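/- arXiv:math/0311492 — 4 statements merged into one kernel-verified Lean document; each statement's English description precedes it below -/
import Mathlib

section
/- Let H be a Hopf algebra over a commutative ring R whose antipode S is bijective, and let μ : H^e = H ⊗_R H^op → H be the R-linear map μ(a ⊗ b°) = ab. Then μ is surjective, and its kernel equals the left ideal of H^e generated by the set E(ker ε) = { E(x) : x ∈ H, ε(x) = 0 }; that is, ker μ = H^e·E(ker ε) as R-submodules of H^e. (This is the algebraic form of the isomorphism H^e_E ⊗_H R ≅ H of left H^e-modules, where H^e is a right H-module via E and R a left H-module via ε.) -/
open TensorProduct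

/-- `E : H → H^e = H ⊗[R] Hᵐᵒᵖ`, `E(c) = Σ c₍₁₎ ⊗ (S(c₍₂₎))°`. -/
noncomputable def hopfE (R : Type*) (H : Type*) [CommRing R] [Ring H]
    [HopfAlgebra R H] : H →ₗ[R] H ⊗[R] Hᵐᵒᵖ :=
  (TensorProduct.map LinearMap.id
      ((MulOpposite.opLinearEquiv R).toLinearMap ∘ₗ HopfAlgebra.antipode (R := R) (A := H))) ∘ₗ
    (Coalgebra.comul (R := R) (A := H))

/-- `μ : H^e = H ⊗[R] Hᵐᵒᵖ → H`, `μ(a ⊗ b°) = a·b`. -/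
noncomputable def hopfMu (R : Type*) (H : Type*) [CommRing R] [Ring H]
    [HopfAlgebra R H] : H ⊗[R] Hᵐᵒᵖ →ₗ[R] H :=
  (LinearMap.mul' R H) ∘ₗ
    (TensorProduct.map LinearMap.id (MulOpposite.opLinearEquiv R).symm.toLinearMap)

/-!
Let `I` be the left ideal of `H^e` generated by `E(ker ε)`. Since `μ ∘ E = ε` and `ker μ` is a
left ideal, `I ⊆ ker μ`. Conversely, coassociativity and the antipode axiom give
`Σ (S(c₁) ⊗ 1) E(c₂) = 1 ⊗ S(c)°`, whence `1 ⊗ S(c)° ≡ S(c) ⊗ 1 (mod I)`. As `S` is surjective,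
every `a ⊗ b°` is then congruent to `ab ⊗ 1`, so `z ≡ μ(z) ⊗ 1 (mod I)` for all `z`, and
`ker μ ⊆ I`.
-/

lemma Coalgebra.sum_counit_right_smul_left {R A ι : Type*} [CommSemiring R] [AddCommMonoid A]
    [Module R A] [Coalgebra R A] {a : A} (r : Coalgebra.Repr R a ι) :
    ∑ i ∈ r.index, Coalgebra.counit (R := R) (r.right i) • r.left i = a := by
  simpa only [map_sum, TensorProduct.lift.tmul, LinearMap.flip_apply, LinearMap.lsmul_apply,
    one_smul] using congr(TensorProduct.lift (LinearMap.lsmul R A).flip $(sum_tmul_counit_eq r))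

section

open Coalgebra HopfAlgebra MulOpposite

variable {R H : Type*} [CommRing R] [Ring H] [HopfAlgebra R H]

local notation "S" => antipode R (A := H)

lemma hopfMu_tmul (a : H) (b : Hᵐᵒᵖ) : hopfMu R H (a ⊗ₜ b) = a * b.unop := by
  simp [hopfMu]

lemma hopfMu_mul_tmul (a : H) (b : Hᵐᵒᵖ) (y : H ⊗[R] Hᵐᵒᵖ) :
    hopfMu R H ((a ⊗ₜ b) * y) = a * hopfMu R H y * b.unop := by
  induction y using TensorProduct.induction_on with
  | zero => simp
  | tmul c d => simp [Algebra.TensorProduct.tmul_mul_tmul, hopfMu_tmul, mul_assoc]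
  | add x y hx hy => simp [mul_add, hx, hy, add_mul]

lemma hopfMu_mul_eq_zero (z : H ⊗[R] Hᵐᵒᵖ) {y : H ⊗[R] Hᵐᵒᵖ} (hy : hopfMu R H y = 0) :
    hopfMu R H (z * y) = 0 := by
  induction z using TensorProduct.induction_on with
  | zero => simp
  | tmul a b => rw [hopfMu_mul_tmul, hy, mul_zero, zero_mul]
  | add x x' hx hx' => rw [add_mul, map_add, hx, hx', add_zero]

lemma hopfE_eq_sum {ι : Type*} {y : H} (r : Repr R y ι) :
    hopfE R H y = ∑ i ∈ r.index, r.left i ⊗ₜ op (S (r.right i)) := by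
  simp [hopfE, ← r.eq]

@[simp]
lemma hopfE_one : hopfE R H 1 = 1 := by
  simp [hopfE, Algebra.TensorProduct.one_def]

lemma hopfMu_hopfE (y : H) : hopfMu R H (hopfE R H y) = algebraMap R H (counit y) := by
  simpa [hopfE_eq_sum (ℛ R y), hopfMu_tmul] using sum_mul_antipode_eq_algebraMap_counit (ℛ R y)

lemma sum_antipode_tmul_one_mul_hopfE {ι : Type*} {c : H} (r : Repr R c ι) :
    ∑ i ∈ r.index, (S (r.left i) ⊗ₜ (1 : Hᵐᵒᵖ)) * hopfE R H (r.right i) = 1 ⊗ₜ op (S c) := by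
  let Φ : H ⊗[R] (H ⊗[R] H) →ₗ[R] H ⊗[R] Hᵐᵒᵖ :=
    TensorProduct.map (LinearMap.mul' R H ∘ₗ (antipode R).rTensor H)
      ((opLinearEquiv R).toLinearMap ∘ₗ antipode R) ∘ₗ (TensorProduct.assoc R H H H).symm
  have hΦ (x y z : H) : Φ (x ⊗ₜ (y ⊗ₜ z)) = (S x * y) ⊗ₜ op (S z) := by simp [Φ]
  have hcoassoc := congrArg Φ (sum_tmul_tmul_eq r (fun i ↦ ℛ R (r.left i)) fun i ↦ ℛ R (r.right i))
  simp only [map_sum, hΦ, ← sum_tmul, sum_antipode_mul_eq_algebraMap_counit] at hcoassoc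
  calc ∑ i ∈ r.index, (S (r.left i) ⊗ₜ (1 : Hᵐᵒᵖ)) * hopfE R H (r.right i)
      = ∑ i ∈ r.index, algebraMap R H (counit (r.left i)) ⊗ₜ op (S (r.right i)) := by
        simp [hcoassoc, hopfE_eq_sum (ℛ R _), Finset.mul_sum, Algebra.TensorProduct.tmul_mul_tmul]
    _ = 1 ⊗ₜ op (S c) := by
        simpa [Algebra.algebraMap_eq_smul_one, smul_tmul, ← tmul_smul, ← tmul_sum] using
          congrArg (fun x ↦ (1 : H) ⊗ₜ[R] op (S x)) (sum_counit_smul r)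

lemma sum_counit_smul_antipode_tmul_one {ι : Type*} {c : H} (r : Repr R c ι) :
    ∑ i ∈ r.index, counit (R := R) (r.right i) • (S (r.left i) ⊗ₜ (1 : Hᵐᵒᵖ)) =
      S c ⊗ₜ[R] (1 : Hᵐᵒᵖ) := by
  simp_rw [smul_tmul', ← sum_tmul, ← map_smul, ← map_sum, sum_counit_right_smul_left]

/-- Writing `Δc = Σ c₁ ⊗ c₂`, the difference is `Σ (S(c₁) ⊗ 1) · E(c₂ - ε(c₂)1)`. -/
lemma one_tmul_op_antipode_sub_antipode_tmul_one_mem (c : H) :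
    1 ⊗ₜ op (S c) - S c ⊗ₜ[R] (1 : Hᵐᵒᵖ) ∈
      Ideal.span (hopfE R H '' {x : H | counit (R := R) x = 0}) := by
  let r := ℛ R c
  have hsum : 1 ⊗ₜ op (S c) - S c ⊗ₜ[R] (1 : Hᵐᵒᵖ) = ∑ i ∈ r.index,
      (S (r.left i) ⊗ₜ (1 : Hᵐᵒᵖ)) * hopfE R H (r.right i - counit (R := R) (r.right i) • 1) := by
    simp only [map_sub, map_smul, hopfE_one, mul_sub, mul_smul_comm, mul_one,
      Finset.sum_sub_distrib, sum_antipode_tmul_one_mul_hopfE, sum_counit_smul_antipode_tmul_one]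
  rw [hsum]
  refine Ideal.sum_mem _ fun i _ ↦ Ideal.mul_mem_left _ _ (Ideal.subset_span ⟨_, ?_, rfl⟩)
  simp

lemma sub_hopfMu_tmul_one_mem (hS : Function.Surjective S) (z : H ⊗[R] Hᵐᵒᵖ) :
    z - hopfMu R H z ⊗ₜ[R] (1 : Hᵐᵒᵖ) ∈
      Ideal.span (hopfE R H '' {x : H | counit (R := R) x = 0}) := by
  induction z using TensorProduct.induction_on with
  | zero => simp
  | tmul a b =>
    obtain ⟨c, hc⟩ := hS b.unop
    have hb : b = op (S c) := by rw [hc, op_unop]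
    have hfactor : a ⊗ₜ b - hopfMu R H (a ⊗ₜ b) ⊗ₜ[R] (1 : Hᵐᵒᵖ) =
        (a ⊗ₜ (1 : Hᵐᵒᵖ)) * (1 ⊗ₜ op (S c) - S c ⊗ₜ[R] (1 : Hᵐᵒᵖ)) := by
      simp [hb, hopfMu_tmul, mul_sub, Algebra.TensorProduct.tmul_mul_tmul]
    rw [hfactor]
    exact Ideal.mul_mem_left _ _ (one_tmul_op_antipode_sub_antipode_tmul_one_mem c)
  | add x y hx hy =>
    rw [map_add, add_tmul, add_sub_add_comm]
    exact Ideal.add_mem _ hx hy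

end

/-- Let `H` be a Hopf algebra over a commutative ring `R` whose antipode is
bijective, and let `μ : H^e = H ⊗[R] Hᵐᵒᵖ → H` be `μ(a ⊗ b°) = ab`.  Then `μ` is surjective
and its kernel is the left ideal of `H^e` generated by `E(ker ε)`; equality being an equality
of `R`-submodules of `H^e`.  (Algebraic form of `H^e_E ⊗_H R ≅ H`.) -/
theorem stmt3 (R : Type*) (H : Type*) [CommRing R] [Ring H] [HopfAlgebra R H]
    (hS : Function.Bijective (HopfAlgebra.antipode (R := R) (A := H))) :
    Function.Surjective (hopfMu R H) ∧
    LinearMap.ker (hopfMu R H) =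
      Submodule.restrictScalars R
        (Ideal.span (hopfE R H '' {x : H | Coalgebra.counit (R := R) x = 0})) := by
  refine ⟨fun h ↦ ⟨h ⊗ₜ 1, by simp [hopfMu_tmul]⟩, le_antisymm (fun x hx ↦ ?_) fun x hx ↦ ?_⟩
  · simpa [LinearMap.mem_ker.1 hx] using sub_hopfMu_tmul_one_mem hS.surjective x
  · induction hx using Submodule.span_induction with
    | mem g hg =>
      obtain ⟨y, hy, rfl⟩ := hg
      simp [LinearMap.mem_ker, hopfMu_hopfE, hy.out]
    | zero => exact zero_mem _
    | add x y _ _ hx hy => exact add_mem hx hy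
    | smul z x _ hx => exact hopfMu_mul_eq_zero z hx
end

section
/- Let A be a commutative unital topological ℂ-algebra (a topological ring with continuous ℂ-scalar multiplication). Suppose there exist elements x₁,…,xₙ ∈ A generating a dense subalgebra of A, and continuous ℂ-linear derivations ∂₁,…,∂ₙ : A → A with ∂ᵢ(xⱼ) = δᵢⱼ for all i,j. Let ∂ : A → Aⁿ be the derivation ∂(a) = (∂₁a,…,∂ₙa), where Aⁿ carries the product topology and the componentwise A-module structure. Then ∂ is a universal continuous derivation: for every topological A-module M which is Hausdorff, with continuous addition and continuous scalar multiplication A × M → M, and for every continuous ℂ-linear derivation D : A → M, there exists a unique A-linear map φ : Aⁿ → M with φ ∘ ∂ = D; moreover this φ is continuous. -/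
/-!
Let `φ : Aⁿ → M` send the `j`-th basis vector to `D xⱼ`. Since `∂ xⱼ` is that basis vector, every
`A`-linear `ψ` with `ψ ∘ ∂ = D` must be `φ`. Conversely, `φ ∘ ∂` is again a continuous derivation,
and it agrees with `D` on the `xⱼ`; derivations agreeing on a set agree on the subalgebra it
generates, hence, being continuous into a Hausdorff space, on its closure, which is all of `A`.
-/

namespace Derivation

variable {R A M : Type*} [CommSemiring R] [CommSemiring A] [Algebra R A]
  [AddCommMonoid M] [Module A M] [Module R M]

def pi {ι : Type*} (d : ι → Derivation R A M) : Derivation R A (ι → M) where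
  toLinearMap := LinearMap.pi fun i => d i
  map_one_eq_zero' := funext fun i => (d i).map_one_eq_zero
  leibniz' a b := funext fun i => (d i).leibniz a b

@[simp]
theorem pi_apply {ι : Type*} (d : ι → Derivation R A M) (a : A) : pi d a = fun i => d i a :=
  rfl

theorem ext_of_dense_adjoin [TopologicalSpace A] [TopologicalSpace M] [T2Space M] {s : Set A}
    (hs : Dense (Algebra.adjoin R s : Set A)) {D₁ D₂ : Derivation R A M}
    (h₁ : Continuous D₁) (h₂ : Continuous D₂) (h : Set.EqOn D₁ D₂ s) : D₁ = D₂ :=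
  DFunLike.coe_injective <| h₁.ext_on hs h₂ (eqOn_adjoin h)

variable {ι : Type*} [Fintype ι] [DecidableEq ι] {d : Derivation R A (ι → A)} {x : ι → A}

theorem eq_linearCombination_of_comp_eq (hx : ∀ j, d (x j) = Pi.single j 1)
    (D : Derivation R A M) {ψ : (ι → A) →ₗ[A] M} (hψ : ∀ a, ψ (d a) = D a) :
    ψ = Fintype.linearCombination A (D ∘ x) :=
  (Pi.basisFun A ι).ext fun j => by
    rw [Pi.basisFun_apply, ← hx, hψ, hx, Fintype.linearCombination_apply_single, one_smul,
      Function.comp_apply]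

theorem linearCombination_comp_eq [IsScalarTower R A M] [TopologicalSpace A]
    [TopologicalSpace M] [T2Space M] [ContinuousAdd M] [ContinuousSMul A M]
    (hx : ∀ j, d (x j) = Pi.single j 1) (D : Derivation R A M)
    (hdense : Dense (Algebra.adjoin R (Set.range x) : Set A)) (hd : Continuous d)
    (hD : Continuous D) (a : A) :
    Fintype.linearCombination A (D ∘ x) (d a) = D a := by
  set φ := Fintype.linearCombination A (D ∘ x)
  have hφ : φ.compDer d = D := by
    refine ext_of_dense_adjoin hdense (φ.continuous_on_pi.comp hd) hD ?_
    rintro _ ⟨j, rfl⟩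
    simp [φ, hx]
  exact DFunLike.congr_fun hφ a

end Derivation

theorem stmt6_general (A : Type*) [CommRing A] [Algebra ℂ A] [TopologicalSpace A]
    (n : ℕ) (x : Fin n → A) (del : Fin n → Derivation ℂ A A)
    (hdense : Dense ((Algebra.adjoin ℂ (Set.range x) : Subalgebra ℂ A) : Set A))
    (hcont : ∀ i, Continuous (del i))
    (hdelta : ∀ i j, del i (x j) = if i = j then 1 else 0)
    (M : Type*) [AddCommGroup M] [Module A M] [Module ℂ M] [IsScalarTower ℂ A M]
    [TopologicalSpace M] [T2Space M] [ContinuousAdd M] [ContinuousSMul A M]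
    (D : Derivation ℂ A M) (hD : Continuous D) :
    ∃ φ : (Fin n → A) →ₗ[A] M,
      (∀ a : A, φ (fun i => del i a) = D a) ∧ Continuous φ ∧
      ∀ ψ : (Fin n → A) →ₗ[A] M, (∀ a : A, ψ (fun i => del i a) = D a) → ψ = φ := by
  have hx : ∀ j, Derivation.pi del (x j) = Pi.single j 1 := fun j =>
    funext fun i => by simp only [Derivation.pi_apply, hdelta, Pi.single_apply]
  refine ⟨Fintype.linearCombination A (D ∘ x), ?_, LinearMap.continuous_on_pi _, ?_⟩
  · exact Derivation.linearCombination_comp_eq hx D hdense (continuous_pi hcont) hD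
  · exact fun ψ hψ => Derivation.eq_linearCombination_of_comp_eq hx D hψ

/-- Let `A` be a commutative unital topological `ℂ`-algebra.  Suppose
`x₁, …, xₙ ∈ A` generate a dense subalgebra and `∂₁, …, ∂ₙ : A → A` are continuous `ℂ`-linear
derivations with `∂ᵢ(xⱼ) = δᵢⱼ`.  Then `∂ = (∂₁, …, ∂ₙ) : A → Aⁿ` is a universal continuous
derivation: for every Hausdorff topological `A`-module `M` (with continuous addition and
continuous scalar multiplication) and every continuous `ℂ`-linear derivation `D : A → M`
there is a unique `A`-linear map `φ : Aⁿ → M` with `φ ∘ ∂ = D`, and this `φ` is continuous. -/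
theorem stmt6 (A : Type*) [CommRing A] [Algebra ℂ A] [TopologicalSpace A]
    [IsTopologicalRing A] [ContinuousSMul ℂ A]
    (n : ℕ) (x : Fin n → A) (del : Fin n → Derivation ℂ A A)
    (hdense : Dense ((Algebra.adjoin ℂ (Set.range x) : Subalgebra ℂ A) : Set A))
    (hcont : ∀ i, Continuous (del i))
    (hdelta : ∀ i j, del i (x j) = if i = j then 1 else 0)
    (M : Type*) [AddCommGroup M] [Module A M] [Module ℂ M] [IsScalarTower ℂ A M]
    [TopologicalSpace M] [T2Space M] [ContinuousAdd M] [ContinuousSMul A M]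
    (D : Derivation ℂ A M) (hD : Continuous D) :
    ∃ φ : (Fin n → A) →ₗ[A] M,
      (∀ a : A, φ (fun i => del i a) = D a) ∧ Continuous φ ∧
      ∀ ψ : (Fin n → A) →ₗ[A] M, (∀ a : A, ψ (fun i => del i a) = D a) → ψ = φ :=
  stmt6_general A n x del hdense hcont hdelta M D hD
end

section
/- Let A be a unital ℂ-algebra equipped with a decreasing filtration by ℂ-subspaces A = F₀ ⊇ F₁ ⊇ F₂ ⊇ ⋯ such that Fᵢ·Fⱼ ⊆ F_{i+j} for all i, j (so each Fₙ is a two-sided ideal), ⋂ₙ Fₙ = {0}, and each quotient A/Fₙ is finite-dimensional over ℂ. Then submultiplicative seminorms separate the points of A: for every nonzero a ∈ A there exists a seminorm p on the ℂ-vector space A satisfying p(xy) ≤ p(x)·p(y) for all x, y ∈ A, such that p(a) ≠ 0. -/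
/-!
If `a ∉ F n`, then `a` acts nontrivially on the finite-dimensional quotient `A ⧸ F n` by left
multiplication (it sends the class of `1` to the class of `a`). Since `F n` is a left ideal, this
action is an algebra homomorphism into the endomorphisms of `A ⧸ F n`, i.e. into a matrix
algebra, and any submultiplicative matrix norm pulled back along it is the required seminorm.
-/

section

attribute [local instance] Matrix.linftyOpNormedRing Matrix.linftyOpNormedAlgebra

variable {𝕜 A B : Type*} [NormedField 𝕜] [Ring A] [Algebra 𝕜 A]

theorem normSeminorm_comp_algHom_mul_le [SeminormedRing B] [NormedAlgebra 𝕜 B]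
    (φ : A →ₐ[𝕜] B) (x y : A) :
    (normSeminorm 𝕜 B).comp φ.toLinearMap (x * y) ≤
      (normSeminorm 𝕜 B).comp φ.toLinearMap x * (normSeminorm 𝕜 B).comp φ.toLinearMap y := by
  simpa only [Seminorm.comp_apply, coe_normSeminorm, AlgHom.toLinearMap_apply, map_mul]
    using norm_mul_le (φ x) (φ y)

theorem exists_submultiplicative_seminorm_ne_zero_of_notMem_leftIdeal (I : Submodule A A)
    [FiniteDimensional 𝕜 (A ⧸ I)] {a : A} (ha : a ∉ I) :
    ∃ p : Seminorm 𝕜 A, (∀ x y : A, p (x * y) ≤ p x * p y) ∧ p a ≠ 0 := by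
  let φ : A →ₐ[𝕜] Matrix _ _ 𝕜 :=
    (LinearMap.toMatrixAlgEquiv (Module.finBasis 𝕜 (A ⧸ I))).toAlgHom.comp
      (Algebra.lsmul 𝕜 𝕜 (A ⧸ I))
  refine ⟨(normSeminorm 𝕜 _).comp φ.toLinearMap, normSeminorm_comp_algHom_mul_le φ, ?_⟩
  intro h
  have hφ : Algebra.lsmul 𝕜 𝕜 (A ⧸ I) a = 0 := by
    simpa [φ] using h
  have hmk : a • (Submodule.Quotient.mk 1 : A ⧸ I) = 0 := LinearMap.congr_fun hφ _
  rw [← Submodule.Quotient.mk_smul, smul_eq_mul, mul_one, Submodule.Quotient.mk_eq_zero] at hmk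
  exact ha hmk

end

theorem stmt7_general (A : Type*) [Ring A] [Algebra ℂ A]
    (F : ℕ → Submodule ℂ A)
    (hF0 : F 0 = ⊤)
    (hFmul : ∀ i j, ∀ a ∈ F i, ∀ b ∈ F j, a * b ∈ F (i + j))
    (hsep : ⨅ n, F n = ⊥)
    (hfin : ∀ n, FiniteDimensional ℂ (A ⧸ F n))
    (a : A) (ha : a ≠ 0) :
    ∃ p : Seminorm ℂ A, (∀ x y : A, p (x * y) ≤ p x * p y) ∧ p a ≠ 0 := by
  obtain ⟨n, hn⟩ : ∃ n, a ∉ F n := by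
    by_contra! h
    exact ha (by simpa [hsep] using Submodule.mem_iInf F |>.mpr h)
  let I : Submodule A A :=
    { F n with
      smul_mem' x b hb := by simpa using hFmul 0 n x (hF0 ▸ Submodule.mem_top) b hb }
  have : FiniteDimensional ℂ (A ⧸ I) :=
    haveI : FiniteDimensional ℂ (A ⧸ I.restrictScalars ℂ) := hfin n
    (Submodule.Quotient.restrictScalarsEquiv ℂ I).finiteDimensional
  exact exists_submultiplicative_seminorm_ne_zero_of_notMem_leftIdeal I hn

/-- Let `A` be a unital `ℂ`-algebra with a decreasing filtration by
`ℂ`-subspaces `A = F₀ ⊇ F₁ ⊇ ⋯` such that `Fᵢ·Fⱼ ⊆ F_{i+j}`, `⋂ₙ Fₙ = {0}`, and every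
quotient `A/Fₙ` is finite-dimensional.  Then submultiplicative seminorms separate the points
of `A`: for every `a ≠ 0` there is a seminorm `p` on `A` with `p(xy) ≤ p(x)p(y)` for all
`x, y` and `p(a) ≠ 0`. -/
theorem stmt7 (A : Type*) [Ring A] [Algebra ℂ A]
    (F : ℕ → Submodule ℂ A)
    (hF0 : F 0 = ⊤)
    (hFdec : ∀ n, F (n + 1) ≤ F n)
    (hFmul : ∀ i j, ∀ a ∈ F i, ∀ b ∈ F j, a * b ∈ F (i + j))
    (hsep : ⨅ n, F n = ⊥)
    (hfin : ∀ n, FiniteDimensional ℂ (A ⧸ F n))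
    (a : A) (ha : a ≠ 0) :
    ∃ p : Seminorm ℂ A, (∀ x y : A, p (x * y) ≤ p x * p y) ∧ p a ≠ 0 :=
  stmt7_general A F hF0 hFmul hsep hfin a ha
end

section
/- Let A be a commutative unital topological ℂ-algebra (a topological ring with continuous ℂ-scalar multiplication) which is a local ring, and suppose there is a continuous ℂ-algebra homomorphism ε : A → ℂ whose kernel is the maximal ideal 𝔪 of A. Let 𝔤 be a finite-dimensional complex Lie algebra acting on A by continuous derivations, i.e. there is a Lie algebra homomorphism ρ from 𝔤 into the Lie algebra of ℂ-linear derivations of A such that each ρ(X) : A → A is continuous. Let C¹(𝔤,A) = Hom_ℂ(𝔤, A) with the A-module structure (a·T)(X) = a·T(X), and let d⁰ : A → C¹(𝔤,A) be the derivation (d⁰a)(X) = ρ(X)a. Suppose there exists a ℂ-linear map χ : 𝔤* → A such that (i) the image of χ generates a dense subalgebra of A, and (ii) ρ(X)(χ(ω)) − ω(X)·1 ∈ 𝔪 for every X ∈ 𝔤 and ω ∈ 𝔤*. Then d⁰ is a universal continuous derivation: for every topological A-module M which is Hausdorff, with continuous addition and continuous scalar multiplication A × M → M, and for every continuous ℂ-linear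 derivation D : A → M, there exists a unique A-linear map φ : C¹(𝔤,A) → M with φ ∘ d⁰ = D; moreover this φ is continuous. -/
/-- Given a Lie algebra `𝔤` acting on a commutative algebra `A` by derivations via `ρ`,
this is the derivation `d⁰ : A → C¹(𝔤,A) = Hom_ℂ(𝔤, A)`, `(d⁰a)(X) = ρ(X)a`. -/
def lieD0 {g : Type*} [LieRing g] [LieAlgebra ℂ g]
    {A : Type*} [CommRing A] [Algebra ℂ A]
    (rho : g →ₗ⁅ℂ⁆ Derivation ℂ A A) (a : A) : g →ₗ[ℂ] A where
  toFun X := rho X a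
  map_add' X Y := by simp
  map_smul' c X := by simp

/-- The topology of pointwise convergence on `Hom_ℂ(𝔤, A)`; since `𝔤` is
finite-dimensional this is the natural topology on `C¹(𝔤,A) ≅ Aⁿ`. -/
noncomputable instance linearMapPointwiseTopology {R M N : Type*} [Semiring R]
    [AddCommMonoid M] [Module R M] [AddCommMonoid N] [Module R N] [TopologicalSpace N] :
    TopologicalSpace (M →ₗ[R] N) :=
  TopologicalSpace.induced DFunLike.coe Pi.topologicalSpace


/-! Fix a basis `(Xᵢ)` of `𝔤` with dual basis `(ωⱼ)`. The matrix `ρ(Xᵢ)(χ(ωⱼ))` is the identity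
modulo `𝔪 = ker ε`, so its determinant is a unit of the local ring `A`; hence the `d⁰(χ(ωⱼ))` form
an `A`-basis of `C¹(𝔤, A)`, which forces `φ(d⁰(χ(ωⱼ))) = D(χ(ωⱼ))`. Any `A`-linear map out of
`C¹(𝔤, A) ≅ Aⁿ` is continuous, so `φ ∘ d⁰` and `D` are continuous derivations that agree on
`χ(𝔤*)`, hence on the dense subalgebra it generates, hence everywhere. -/

open IsLocalRing

theorem IsLocalRing.isUnit_det_of_map_eq_one {A K ι : Type*} [CommRing A] [IsLocalRing A]
    [CommRing K] [Nontrivial K] [Fintype ι] [DecidableEq ι] (f : A →+* K)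
    (hf : maximalIdeal A ≤ RingHom.ker f) {G : Matrix ι ι A} (hG : G.map f = 1) :
    IsUnit G.det := by
  by_contra hunit
  have hdet : f G.det = 0 := hf ((mem_maximalIdeal _).2 hunit)
  rw [RingHom.map_det, RingHom.mapMatrix_apply, hG, Matrix.det_one] at hdet
  exact one_ne_zero hdet

theorem LinearMap.continuous_eval_const {R M N : Type*} [Semiring R] [AddCommMonoid M]
    [Module R M] [AddCommMonoid N] [Module R N] [TopologicalSpace N] (x : M) :
    Continuous fun f : M →ₗ[R] N => f x :=
  (continuous_apply x).comp continuous_induced_dom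

section LinearMapDomain

variable {K V A : Type*} [CommRing K] [AddCommGroup V] [Module K V] [CommRing A] [Module K A]
  [SMulCommClass K A A]

theorem LinearMap.continuous_on_linearMap [Module.Free K V] [Module.Finite K V]
    [TopologicalSpace A] {M : Type*} [AddCommGroup M] [Module A M] [TopologicalSpace M]
    [ContinuousAdd M] [ContinuousSMul A M] (f : (V →ₗ[K] A) →ₗ[A] M) : Continuous f := by
  let e := (Module.Free.chooseBasis K V).constr A (M' := A)
  have hf : (f : (V →ₗ[K] A) → M) = (f ∘ₗ e.toLinearMap) ∘ e.symm := by
    ext T; simp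
  rw [hf]
  exact (f ∘ₗ e.toLinearMap).continuous_on_pi.comp
    (continuous_pi fun i => continuous_eval_const _)

variable {ι : Type*} [Fintype ι] [DecidableEq ι]

noncomputable def Module.Basis.ofIsUnitDetEval (b : Basis ι K V) (e : ι → V →ₗ[K] A)
    (h : IsUnit (Matrix.of fun i j => e j (b i)).det) : Basis ι A (V →ₗ[K] A) :=
  -- The matrix of `e` in the `A`-basis of `Hom_K(V, A)` dual to `b` is `(e j (b i))` by `rfl`.
  have hbasis := (is_basis_iff_det ((Pi.basisFun A ι).map (b.constr A))).2 h
  Basis.mk hbasis.1 hbasis.2.ge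

@[simp]
theorem Module.Basis.coe_ofIsUnitDetEval (b : Basis ι K V) (e : ι → V →ₗ[K] A)
    (h : IsUnit (Matrix.of fun i j => e j (b i)).det) : ⇑(b.ofIsUnitDetEval e h) = e := by
  simp [ofIsUnitDetEval]

end LinearMapDomain

theorem Derivation.eq_of_dense_adjoin {R A M : Type*} [CommSemiring R] [CommSemiring A]
    [Algebra R A] [TopologicalSpace A] [AddCommMonoid M] [Module A M] [Module R M]
    [IsScalarTower R A M] [TopologicalSpace M] [T2Space M] {D₁ D₂ : Derivation R A M}
    (h₁ : Continuous D₁) (h₂ : Continuous D₂) {s : Set A}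
    (hs : Dense (Algebra.adjoin R s : Set A)) (h : Set.EqOn D₁ D₂ s) : D₁ = D₂ :=
  Derivation.coe_injective (h₁.ext_on hs h₂ (Derivation.eqOn_adjoin h))

section LieDerivation

variable {g A : Type*} [LieRing g] [LieAlgebra ℂ g] [CommRing A] [Algebra ℂ A]
  (rho : g →ₗ⁅ℂ⁆ Derivation ℂ A A)

@[simp]
theorem lieD0_apply (a : A) (X : g) : lieD0 rho a X = rho X a := rfl

def lieD0Derivation : Derivation ℂ A (g →ₗ[ℂ] A) where
  toFun := lieD0 rho
  map_add' a b := by ext; simp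
  map_smul' c a := by ext; simp
  map_one_eq_zero' := by ext; simp
  leibniz' a b := by ext; simp

@[simp]
theorem coe_lieD0Derivation : ⇑(lieD0Derivation rho) = lieD0 rho := rfl

theorem continuous_lieD0 [TopologicalSpace A] (hcont : ∀ X : g, Continuous (rho X)) :
    Continuous (lieD0 rho) :=
  continuous_induced_rng.2 (continuous_pi hcont)

end LieDerivation

theorem stmt12_general (A : Type*) [CommRing A] [Algebra ℂ A] [TopologicalSpace A] [IsLocalRing A]
    (eps : A →ₐ[ℂ] ℂ) (hker : RingHom.ker (eps : A →+* ℂ) = IsLocalRing.maximalIdeal A)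
    (g : Type*) [LieRing g] [LieAlgebra ℂ g] [FiniteDimensional ℂ g]
    (rho : g →ₗ⁅ℂ⁆ Derivation ℂ A A)
    (hcont : ∀ X : g, Continuous (rho X))
    (chi : Module.Dual ℂ g →ₗ[ℂ] A)
    (hdense : Dense ((Algebra.adjoin ℂ (Set.range chi) : Subalgebra ℂ A) : Set A))
    (hchi : ∀ (X : g) (om : Module.Dual ℂ g),
      rho X (chi om) - algebraMap ℂ A (om X) ∈ IsLocalRing.maximalIdeal A)
    (M : Type*) [AddCommGroup M] [Module A M] [Module ℂ M] [IsScalarTower ℂ A M]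
    [TopologicalSpace M] [T2Space M] [ContinuousAdd M] [ContinuousSMul A M]
    (D : Derivation ℂ A M) (hD : Continuous D) :
    ∃ φ : (g →ₗ[ℂ] A) →ₗ[A] M,
      (∀ a : A, φ (lieD0 rho a) = D a) ∧ Continuous φ ∧
      ∀ ψ : (g →ₗ[ℂ] A) →ₗ[A] M, (∀ a : A, ψ (lieD0 rho a) = D a) → ψ = φ := by
  classical
  let b := Module.finBasis ℂ g
  let ω := b.dualBasis
  have heps_chi (X : g) (om : Module.Dual ℂ g) : eps (rho X (chi om)) = om X := by
    have h := (RingHom.mem_ker (f := (eps : A →+* ℂ))).1 (hker ▸ hchi X om)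
    simpa [sub_eq_zero] using h
  have hG : IsUnit (Matrix.of fun i j => lieD0 rho (chi (ω j)) (b i)).det := by
    refine isUnit_det_of_map_eq_one (eps : A →+* ℂ) hker.ge ?_
    ext i j
    simp only [Matrix.map_apply, Matrix.of_apply, lieD0_apply, AlgHom.coe_toRingHom, heps_chi, ω,
      b.dualBasis_apply_self, Matrix.one_apply]
  let B := b.ofIsUnitDetEval _ hG
  have hB (j) : B j = lieD0 rho (chi (ω j)) := by simp [B]
  let φ := B.constr A fun j => D (chi (ω j))
  have hφB (j) : φ (B j) = D (chi (ω j)) := B.constr_basis A _ j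
  have hφ : ∀ ψ : (g →ₗ[ℂ] A) →ₗ[A] M, (∀ a : A, ψ (lieD0 rho a) = D a) → ψ = φ := fun ψ hψ =>
    B.ext fun j => by rw [hφB, hB, hψ]
  refine ⟨φ, fun a => ?_, φ.continuous_on_linearMap, hφ⟩
  have hgen : (φ.compDer (lieD0Derivation rho) : A →ₗ[ℂ] M) ∘ₗ chi = (D : A →ₗ[ℂ] M) ∘ₗ chi :=
    ω.ext fun j => by simpa [hB] using hφB j
  have hcomp : φ.compDer (lieD0Derivation rho) = D := by
    refine Derivation.eq_of_dense_adjoin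
      (φ.continuous_on_linearMap.comp (continuous_lieD0 rho hcont)) hD hdense ?_
    rintro _ ⟨om, rfl⟩
    exact LinearMap.congr_fun hgen om
  exact congr($hcomp a)

/-- Let `A` be a commutative unital topological `ℂ`-algebra which is a local
ring, with a continuous character `ε : A → ℂ` whose kernel is the maximal ideal `𝔪`.  Let a
finite-dimensional complex Lie algebra `𝔤` act on `A` by continuous derivations via `ρ`, and
let `d⁰ : A → C¹(𝔤,A) = Hom_ℂ(𝔤,A)` be `(d⁰a)(X) = ρ(X)a`.  If there is a `ℂ`-linear map
`χ : 𝔤* → A` whose image generates a dense subalgebra of `A` and with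
`ρ(X)(χ(ω)) − ω(X)·1 ∈ 𝔪` for all `X, ω`, then `d⁰` is a universal continuous derivation:
for every Hausdorff topological `A`-module `M` and every continuous `ℂ`-linear derivation
`D : A → M` there is a unique `A`-linear `φ : C¹(𝔤,A) → M` with `φ ∘ d⁰ = D`, and this `φ`
is continuous. -/
theorem stmt12 (A : Type*) [CommRing A] [Algebra ℂ A] [TopologicalSpace A]
    [IsTopologicalRing A] [ContinuousSMul ℂ A] [IsLocalRing A]
    (eps : A →ₐ[ℂ] ℂ) (heps : Continuous eps)
    (hker : RingHom.ker (eps : A →+* ℂ) = IsLocalRing.maximalIdeal A)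
    (g : Type*) [LieRing g] [LieAlgebra ℂ g] [FiniteDimensional ℂ g]
    (rho : g →ₗ⁅ℂ⁆ Derivation ℂ A A)
    (hcont : ∀ X : g, Continuous (rho X))
    (chi : Module.Dual ℂ g →ₗ[ℂ] A)
    (hdense : Dense ((Algebra.adjoin ℂ (Set.range chi) : Subalgebra ℂ A) : Set A))
    (hchi : ∀ (X : g) (om : Module.Dual ℂ g),
      rho X (chi om) - algebraMap ℂ A (om X) ∈ IsLocalRing.maximalIdeal A)
    (M : Type*) [AddCommGroup M] [Module A M] [Module ℂ M] [IsScalarTower ℂ A M]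
    [TopologicalSpace M] [T2Space M] [ContinuousAdd M] [ContinuousSMul A M]
    (D : Derivation ℂ A M) (hD : Continuous D) :
    ∃ φ : (g →ₗ[ℂ] A) →ₗ[A] M,
      (∀ a : A, φ (lieD0 rho a) = D a) ∧ Continuous φ ∧
      ∀ ψ : (g →ₗ[ℂ] A) →ₗ[A] M, (∀ a : A, ψ (lieD0 rho a) = D a) → ψ = φ :=
  stmt12_general A eps hker g rho hcont chi hdense hchi M D hD
end
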